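/- Let a, b, c ≥ 1 be integers and let σ : ℝ² → ℝ² be the affine map σ(x,y) = (b−x−y, y). Then σ maps H(a,b,c) onto H(c,b,a) and maps lozenges to lozenges, and for every integer k ≥ 1, the map Φ sending a k-tiling T = (T_1,…,T_k) of H(a,b,c) to Φ(T) = (σ(T_k), σ(T_{k−1}), …, σ(T_1)) is a bijection from the set of k-tilings of H(a,b,c) onto the set of k-tilings of H(c,b,a), and ν(T) − ν(Φ(T)) = (k(k−1)/2)·(ab − bc) for every k-tiling T of H(a,b,c). -/

import Mathlib

namespace LozengeHex

/-- The upward triangle `Δ(x,y)` with vertices `(x+1,y)`, `(x+1,y+1)`, `(x,y+1)`. -/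
def triU (p : ℤ × ℤ) : Set (ℝ × ℝ) :=
  convexHull ℝ {(((p.1 : ℝ) + 1, (p.2 : ℝ))), ((p.1 : ℝ) + 1, (p.2 : ℝ) + 1),
    ((p.1 : ℝ), (p.2 : ℝ) + 1)}

/-- The downward triangle `∇(x,y)` with vertices `(x,y)`, `(x+1,y)`, `(x,y+1)`. -/
def triD (p : ℤ × ℤ) : Set (ℝ × ℝ) :=
  convexHull ℝ {(((p.1 : ℝ), (p.2 : ℝ))), ((p.1 : ℝ) + 1, (p.2 : ℝ)),
    ((p.1 : ℝ), (p.2 : ℝ) + 1)}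

/-- A lozenge: `Δ(x,y) ∪ ∇(x,y+1)` (type 1), `Δ(x,y) ∪ ∇(x,y)` (type 2), or
`Δ(x,y) ∪ ∇(x+1,y)` (type 3). -/
inductive Loz : Type where
  | t1 : ℤ × ℤ → Loz
  | t2 : ℤ × ℤ → Loz
  | t3 : ℤ × ℤ → Loz
deriving DecidableEq

/-- The subset of `ℝ²` occupied by a lozenge. -/
def Loz.set : Loz → Set (ℝ × ℝ)
  | .t1 p => triU p ∪ triD (p.1, p.2 + 1)
  | .t2 p => triU p ∪ triD p
  | .t3 p => triU p ∪ triD (p.1 + 1, p.2)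

/-- The hexagon `H(a,b,c)`: the closed polygon with vertices `(0,0)`, `(b,0)`, `(b,c)`,
`(b-a, a+c)`, `(-a, a+c)`, `(-a, a)` (a convex hexagon in the sheared coordinates). -/
def hexagon (a b c : ℤ) : Set (ℝ × ℝ) :=
  convexHull ℝ {((0 : ℝ), (0 : ℝ)), ((b : ℝ), 0), ((b : ℝ), (c : ℝ)),
    ((b : ℝ) - (a : ℝ), (a : ℝ) + (c : ℝ)), (-(a : ℝ), (a : ℝ) + (c : ℝ)),
    (-(a : ℝ), (a : ℝ))}

/-- A lozenge tiling of `H(a,b,c)`: a set of lozenges with pairwise disjoint interiors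
whose union is `H(a,b,c)`. -/
structure LozTiling (a b c : ℤ) where
  tiles : Set Loz
  disj : tiles.Pairwise fun L L' => Disjoint (interior L.set) (interior L'.set)
  cover : (⋃ L ∈ tiles, Loz.set L) = hexagon a b c

/-- `L` (of a smaller color) and `L'` (of a larger color) interact: `L` is a type-3
lozenge `Δ(x,y) ∪ ∇(x+1,y)`, `L'` contains the triangle `Δ(x,y)`, and `L'` is of
type 1 or type 3. -/
def LozInteract (L L' : Loz) : Prop :=
  (∃ p : ℤ × ℤ, L = .t3 p ∧ triU p ⊆ L'.set) ∧
    ((∃ p', L' = .t1 p') ∨ (∃ p', L' = .t3 p'))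

/-- The number of interactions of a `k`-tiling: the number of tuples `(i, j, L, L')` with
colors `i < j`, `L ∈ T_i`, `L' ∈ T_j`, such that `L` and `L'` interact. -/
noncomputable def nuL {a b c : ℤ} {k : ℕ} (T : Fin k → LozTiling a b c) : ℕ :=
  Nat.card {q : (Fin k × Fin k) × Loz × Loz //
    q.1.1 < q.1.2 ∧ q.2.1 ∈ (T q.1.1).tiles ∧ q.2.2 ∈ (T q.1.2).tiles ∧
      LozInteract q.2.1 q.2.2}

/-- The affine map `σ(x, y) = (b - x - y, y)`. -/
def σmap (b : ℤ) : ℝ × ℝ → ℝ × ℝ := fun p => ((b : ℝ) - p.1 - p.2, p.2)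


lemma isLinearMap_fst' : IsLinearMap ℝ (fun z : ℝ × ℝ => z.1) := ⟨fun _ _ => rfl, fun _ _ => rfl⟩
lemma isLinearMap_snd' : IsLinearMap ℝ (fun z : ℝ × ℝ => z.2) := ⟨fun _ _ => rfl, fun _ _ => rfl⟩
lemma isLinearMap_sum' : IsLinearMap ℝ (fun z : ℝ × ℝ => z.1 + z.2) :=
  ⟨fun _ _ => by simp [Prod.fst_add, Prod.snd_add]; ring,
   fun _ _ => by simp [Prod.smul_fst, Prod.smul_snd, smul_eq_mul]; ring⟩

/-- membership in a triangle hull given explicit barycentric weights -/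
lemma mem_convexHull_triple {A B C z : ℝ × ℝ} {α β γ : ℝ}
    (hα : 0 ≤ α) (hβ : 0 ≤ β) (hγ : 0 ≤ γ) (hsum : α + β + γ = 1)
    (hz : z = α • A + β • B + γ • C) : z ∈ convexHull ℝ ({A, B, C} : Set (ℝ × ℝ)) := by
  have hA : A ∈ convexHull ℝ ({A, B, C} : Set (ℝ × ℝ)) :=
    subset_convexHull ℝ _ (by simp)
  have hB : B ∈ convexHull ℝ ({A, B, C} : Set (ℝ × ℝ)) :=
    subset_convexHull ℝ _ (by simp)
  have hC : C ∈ convexHull ℝ ({A, B, C} : Set (ℝ × ℝ)) :=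
    subset_convexHull ℝ _ (by simp)
  have hconv : Convex ℝ (convexHull ℝ ({A, B, C} : Set (ℝ × ℝ))) := convex_convexHull ℝ _
  rcases eq_or_lt_of_le (add_nonneg hβ hγ) with h0 | hpos
  · have hβ0 : β = 0 := by linarith
    have hγ0 : γ = 0 := by linarith
    have : α = 1 := by linarith
    subst hβ0; subst hγ0
    simp [this] at hz
    simpa [hz] using hA
  · set s := β + γ with hs
    have hw : (β / s) • B + (γ / s) • C ∈ convexHull ℝ ({A, B, C} : Set (ℝ × ℝ)) :=
      hconv hB hC (by positivity) (by positivity) (by field_simp; exact hs.symm)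
    have := hconv hA hw hα (le_of_lt hpos) (by linarith)
    convert this using 1
    rw [hz, smul_add, smul_smul, smul_smul]
    have hsne : s ≠ 0 := ne_of_gt hpos
    rw [mul_div_cancel₀ _ hsne, mul_div_cancel₀ _ hsne, add_assoc]

lemma triU_eq (p : ℤ × ℤ) :
    triU p = {z : ℝ × ℝ | z.1 ≤ (p.1 : ℝ) + 1 ∧ z.2 ≤ (p.2 : ℝ) + 1 ∧
      (p.1 : ℝ) + (p.2 : ℝ) + 1 ≤ z.1 + z.2} := by
  apply le_antisymm
  · apply convexHull_min
    · rintro z (rfl | rfl | rfl) <;> refine ⟨by dsimp; linarith, by dsimp; linarith, by dsimp; linarith⟩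
    · exact (convex_halfSpace_le isLinearMap_fst' _).inter
        ((convex_halfSpace_le isLinearMap_snd' _).inter (convex_halfSpace_ge isLinearMap_sum' _))
  · rintro ⟨x, y⟩ ⟨h1, h2, h3⟩
    simp only [Set.mem_setOf_eq] at h1 h2 h3
    exact mem_convexHull_triple (A := ((p.1 : ℝ) + 1, (p.2 : ℝ)))
      (B := ((p.1 : ℝ) + 1, (p.2 : ℝ) + 1)) (C := ((p.1 : ℝ), (p.2 : ℝ) + 1))
      (α := (p.2 : ℝ) + 1 - y) (β := x + y - ((p.1 : ℝ) + (p.2 : ℝ) + 1))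
      (γ := (p.1 : ℝ) + 1 - x) (by linarith) (by linarith) (by linarith) (by ring)
      (by simp [Prod.ext_iff]; constructor <;> ring)

lemma triD_eq (p : ℤ × ℤ) :
    triD p = {z : ℝ × ℝ | (p.1 : ℝ) ≤ z.1 ∧ (p.2 : ℝ) ≤ z.2 ∧
      z.1 + z.2 ≤ (p.1 : ℝ) + (p.2 : ℝ) + 1} := by
  apply le_antisymm
  · apply convexHull_min
    · rintro z (rfl | rfl | rfl) <;> refine ⟨by dsimp; linarith, by dsimp; linarith, by dsimp; linarith⟩
    · exact (convex_halfSpace_ge isLinearMap_fst' _).inter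
        ((convex_halfSpace_ge isLinearMap_snd' _).inter (convex_halfSpace_le isLinearMap_sum' _))
  · rintro ⟨x, y⟩ ⟨h1, h2, h3⟩
    simp only [Set.mem_setOf_eq] at h1 h2 h3
    exact mem_convexHull_triple (A := ((p.1 : ℝ), (p.2 : ℝ)))
      (B := ((p.1 : ℝ) + 1, (p.2 : ℝ))) (C := ((p.1 : ℝ), (p.2 : ℝ) + 1))
      (α := (p.1 : ℝ) + (p.2 : ℝ) + 1 - x - y) (β := x - (p.1 : ℝ))
      (γ := y - (p.2 : ℝ)) (by linarith) (by linarith) (by linarith) (by ring)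
      (by simp [Prod.ext_iff]; constructor <;> ring)

def region (a b c : ℤ) : Set (ℝ × ℝ) :=
  {z : ℝ × ℝ | 0 ≤ z.2 ∧ z.2 ≤ (a : ℝ) + c ∧ -(a : ℝ) ≤ z.1 ∧ z.1 ≤ b ∧
    0 ≤ z.1 + z.2 ∧ z.1 + z.2 ≤ (b : ℝ) + c}

set_option maxHeartbeats 2000000 in
lemma hexagon_eq (a b c : ℤ) (ha : 1 ≤ a) (hb : 1 ≤ b) (hc : 1 ≤ c) :
    hexagon a b c = region a b c := by
  have ha' : (1 : ℝ) ≤ (a : ℝ) := by exact_mod_cast ha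
  have hb' : (1 : ℝ) ≤ (b : ℝ) := by exact_mod_cast hb
  have hc' : (1 : ℝ) ≤ (c : ℝ) := by exact_mod_cast hc
  have ha0 : (0 : ℝ) < a := by linarith
  have hb0 : (0 : ℝ) < b := by linarith
  have hc0 : (0 : ℝ) < c := by linarith
  apply le_antisymm
  · apply convexHull_min
    · rintro z (rfl | rfl | rfl | rfl | rfl | rfl) <;>
        refine ⟨by dsimp; linarith, by dsimp; linarith, by dsimp; linarith, by dsimp; linarith,
          by dsimp; linarith, by dsimp; linarith⟩
    · exact (convex_halfSpace_ge isLinearMap_snd' _).inter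
        ((convex_halfSpace_le isLinearMap_snd' _).inter
        ((convex_halfSpace_ge isLinearMap_fst' _).inter
        ((convex_halfSpace_le isLinearMap_fst' _).inter
        ((convex_halfSpace_ge isLinearMap_sum' _).inter
        (convex_halfSpace_le isLinearMap_sum' _)))))
  · rintro ⟨x, y⟩ ⟨h1, h2, h3, h4, h5, h6⟩
    simp only [Set.mem_setOf_eq] at h1 h2 h3 h4 h5 h6
    unfold hexagon
    rcases le_or_gt ((b : ℝ) * y) ((c : ℝ) * x) with hcase1 | hcase1
    · -- triangle (0,0), (b,0), (b,c)
      apply convexHull_mono (show ({((0:ℝ),(0:ℝ)), ((b:ℝ),(0:ℝ)), ((b:ℝ),(c:ℝ))} : Set (ℝ×ℝ)) ⊆ _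
        by intro z hz; simp only [Set.mem_insert_iff, Set.mem_singleton_iff] at hz ⊢; tauto)
      refine mem_convexHull_triple (α := 1 - x / b) (β := x / b - y / c) (γ := y / c)
        ?_ ?_ ?_ (by ring) ?_
      · rw [sub_nonneg, div_le_one hb0]; exact h4
      · rw [sub_nonneg, div_le_div_iff₀ hc0 hb0]; nlinarith
      · positivity
      · simp only [Prod.ext_iff, Prod.fst_add, Prod.snd_add, Prod.smul_fst, Prod.smul_snd,
          smul_eq_mul]
        constructor <;> field_simp <;> ring
    · rcases le_or_gt (((b : ℝ) - a) * y) (((a : ℝ) + c) * x) with hcase2 | hcase2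
      · -- triangle (0,0), (b,c), (b-a,a+c)
        apply convexHull_mono (show ({((0:ℝ),(0:ℝ)), ((b:ℝ),(c:ℝ)),
            ((b:ℝ)-(a:ℝ),(a:ℝ)+(c:ℝ))} : Set (ℝ×ℝ)) ⊆ _
          by intro z hz; simp only [Set.mem_insert_iff, Set.mem_singleton_iff] at hz ⊢; tauto)
        refine mem_convexHull_triple (α := 1 - (x + y) / (b + c))
          (β := (x * (a + c) - y * (b - a)) / (a * (b + c)))
          (γ := (b * y - c * x) / (a * (b + c))) ?_ ?_ ?_ ?_ ?_
        · rw [sub_nonneg, div_le_one (by linarith)]; exact h6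
        · apply div_nonneg (by nlinarith) (by positivity)
        · apply div_nonneg (by nlinarith) (by positivity)
        · field_simp
          ring
        · simp only [Prod.ext_iff, Prod.fst_add, Prod.snd_add, Prod.smul_fst, Prod.smul_snd,
            smul_eq_mul]
          constructor <;> field_simp <;> ring
      · rcases le_or_gt (-(a : ℝ) * y) (((a : ℝ) + c) * x) with hcase3 | hcase3
        · -- triangle (0,0), (b-a,a+c), (-a,a+c)
          apply convexHull_mono (show ({((0:ℝ),(0:ℝ)), ((b:ℝ)-(a:ℝ),(a:ℝ)+(c:ℝ)),
              (-(a:ℝ),(a:ℝ)+(c:ℝ))} : Set (ℝ×ℝ)) ⊆ _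
            by intro z hz; simp only [Set.mem_insert_iff, Set.mem_singleton_iff] at hz ⊢; tauto)
          refine mem_convexHull_triple (α := 1 - y / (a + c))
            (β := (x * (a + c) + a * y) / (b * (a + c)))
            (γ := (y * (b - a) - x * (a + c)) / (b * (a + c))) ?_ ?_ ?_ ?_ ?_
          · rw [sub_nonneg, div_le_one (by linarith)]; exact h2
          · apply div_nonneg (by nlinarith) (by positivity)
          · apply div_nonneg (by nlinarith) (by positivity)
          · field_simp
            ring
          · simp only [Prod.ext_iff, Prod.fst_add, Prod.snd_add, Prod.smul_fst, Prod.smul_snd,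
              smul_eq_mul]
            constructor <;> field_simp <;> ring
        · -- triangle (0,0), (-a,a+c), (-a,a)
          apply convexHull_mono (show ({((0:ℝ),(0:ℝ)), (-(a:ℝ),(a:ℝ)+(c:ℝ)),
              (-(a:ℝ),(a:ℝ))} : Set (ℝ×ℝ)) ⊆ _
            by intro z hz; simp only [Set.mem_insert_iff, Set.mem_singleton_iff] at hz ⊢; tauto)
          refine mem_convexHull_triple (α := 1 + x / a)
            (β := (x + y) / c)
            (γ := -(x / a) - (x + y) / c) ?_ ?_ ?_ ?_ ?_
          · have : -(1:ℝ) ≤ x / a := by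
              rw [neg_le, ← neg_div]
              apply div_le_one_of_le₀ (by linarith) (by linarith)
            linarith
          · positivity
          · have hnum : 0 ≤ -(c * x) - a * (x + y) := by nlinarith
            have : -(x/a) - (x+y)/c = (-(c * x) - a * (x + y)) / (a * c) := by
              field_simp
            rw [this]
            apply div_nonneg hnum (by positivity)
          · field_simp
            ring
          · simp only [Prod.ext_iff, Prod.fst_add, Prod.snd_add, Prod.smul_fst, Prod.smul_snd,
              smul_eq_mul]
            constructor <;> field_simp <;> ring

def Loz.base : Loz → ℤ × ℤ
  | .t1 p => p
  | .t2 p => p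
  | .t3 p => p

def Loz.dbase : Loz → ℤ × ℤ
  | .t1 p => (p.1, p.2 + 1)
  | .t2 p => p
  | .t3 p => (p.1 + 1, p.2)

lemma Loz.set_eq (L : Loz) : L.set = triU L.base ∪ triD L.dbase := by
  cases L <;> rfl

noncomputable def cU (p : ℤ × ℤ) : ℝ × ℝ := ((p.1 : ℝ) + 2/3, (p.2 : ℝ) + 2/3)
noncomputable def cD (p : ℤ × ℤ) : ℝ × ℝ := ((p.1 : ℝ) + 1/3, (p.2 : ℝ) + 1/3)

lemma cU_mem_triU (p : ℤ × ℤ) : cU p ∈ triU p := by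
  rw [triU_eq]
  refine ⟨by norm_num [cU], by norm_num [cU], by simp only [cU]; linarith⟩

lemma cD_mem_triD (p : ℤ × ℤ) : cD p ∈ triD p := by
  rw [triD_eq]
  refine ⟨by norm_num [cD], by norm_num [cD], by simp only [cD]; linarith⟩

lemma cU_not_mem_triD (p q : ℤ × ℤ) : cU p ∉ triD q := by
  intro h
  rw [triD_eq] at h
  obtain ⟨h1, h2, h3⟩ := h
  simp only [cU] at h1 h2 h3
  have i1 : q.1 < p.1 + 1 := by exact_mod_cast show (q.1 : ℝ) < ((p.1 : ℤ) : ℝ) + 1 by linarith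
  have i2 : q.2 < p.2 + 1 := by exact_mod_cast show (q.2 : ℝ) < ((p.2 : ℤ) : ℝ) + 1 by linarith
  have i3 : (p.1 + p.2 : ℤ) < q.1 + q.2 := by
    exact_mod_cast show ((p.1 : ℝ) + (p.2 : ℝ)) < (q.1 : ℝ) + (q.2 : ℝ) by linarith
  omega

lemma cD_not_mem_triU (p q : ℤ × ℤ) : cD p ∉ triU q := by
  intro h
  rw [triU_eq] at h
  obtain ⟨h1, h2, h3⟩ := h
  simp only [cD] at h1 h2 h3
  have i1 : p.1 < q.1 + 1 := by exact_mod_cast show (p.1 : ℝ) < ((q.1 : ℤ) : ℝ) + 1 by linarith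
  have i2 : p.2 < q.2 + 1 := by exact_mod_cast show (p.2 : ℝ) < ((q.2 : ℤ) : ℝ) + 1 by linarith
  have i3 : (q.1 + q.2 : ℤ) < p.1 + p.2 := by
    exact_mod_cast show ((q.1 : ℝ) + (q.2 : ℝ)) < (p.1 : ℝ) + (p.2 : ℝ) by linarith
  omega

lemma cU_mem_triU_iff {p q : ℤ × ℤ} (h : cU p ∈ triU q) : q = p := by
  rw [triU_eq] at h
  obtain ⟨h1, h2, h3⟩ := h
  simp only [cU] at h1 h2 h3
  have i1 : p.1 < q.1 + 1 := by exact_mod_cast show (p.1 : ℝ) < ((q.1 : ℤ) : ℝ) + 1 by linarith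
  have i2 : p.2 < q.2 + 1 := by exact_mod_cast show (p.2 : ℝ) < ((q.2 : ℤ) : ℝ) + 1 by linarith
  have i3 : (q.1 + q.2 : ℤ) < p.1 + p.2 + 1 := by
    exact_mod_cast show ((q.1 : ℝ) + (q.2 : ℝ)) < (p.1 : ℝ) + (p.2 : ℝ) + 1 by linarith
  have : q.1 = p.1 ∧ q.2 = p.2 := by omega
  exact Prod.ext this.1 this.2

lemma cD_mem_triD_iff {p q : ℤ × ℤ} (h : cD p ∈ triD q) : q = p := by
  rw [triD_eq] at h
  obtain ⟨h1, h2, h3⟩ := h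
  simp only [cD] at h1 h2 h3
  have i1 : q.1 < p.1 + 1 := by exact_mod_cast show (q.1 : ℝ) < ((p.1 : ℤ) : ℝ) + 1 by linarith
  have i2 : q.2 < p.2 + 1 := by exact_mod_cast show (q.2 : ℝ) < ((p.2 : ℤ) : ℝ) + 1 by linarith
  have i3 : (p.1 + p.2 : ℤ) < q.1 + q.2 + 1 := by
    exact_mod_cast show ((p.1 : ℝ) + (p.2 : ℝ)) < (q.1 : ℝ) + (q.2 : ℝ) + 1 by linarith
  have : q.1 = p.1 ∧ q.2 = p.2 := by omega
  exact Prod.ext this.1 this.2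

lemma base_eq_of_cU_mem {L : Loz} {p : ℤ × ℤ} (h : cU p ∈ L.set) : L.base = p := by
  rw [Loz.set_eq] at h
  rcases h with h | h
  · exact cU_mem_triU_iff h
  · exact absurd h (cU_not_mem_triD _ _)

lemma dbase_eq_of_cD_mem {L : Loz} {p : ℤ × ℤ} (h : cD p ∈ L.set) : L.dbase = p := by
  rw [Loz.set_eq] at h
  rcases h with h | h
  · exact absurd h (cD_not_mem_triU _ _)
  · exact cD_mem_triD_iff h

lemma cU_base_mem (L : Loz) : cU L.base ∈ L.set := by
  rw [Loz.set_eq]; exact Or.inl (cU_mem_triU _)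

lemma cD_dbase_mem (L : Loz) : cD L.dbase ∈ L.set := by
  rw [Loz.set_eq]; exact Or.inr (cD_mem_triD _)

def openU (p : ℤ × ℤ) : Set (ℝ × ℝ) :=
  {z : ℝ × ℝ | z.1 < (p.1 : ℝ) + 1 ∧ z.2 < (p.2 : ℝ) + 1 ∧ (p.1 : ℝ) + (p.2 : ℝ) + 1 < z.1 + z.2}

def openD (p : ℤ × ℤ) : Set (ℝ × ℝ) :=
  {z : ℝ × ℝ | (p.1 : ℝ) < z.1 ∧ (p.2 : ℝ) < z.2 ∧ z.1 + z.2 < (p.1 : ℝ) + (p.2 : ℝ) + 1}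

lemma isOpen_openU (p : ℤ × ℤ) : IsOpen (openU p) :=
  ((isOpen_lt continuous_fst continuous_const).inter
    ((isOpen_lt continuous_snd continuous_const).inter
      (isOpen_lt continuous_const (continuous_fst.add continuous_snd))))

lemma isOpen_openD (p : ℤ × ℤ) : IsOpen (openD p) :=
  ((isOpen_lt continuous_const continuous_fst).inter
    ((isOpen_lt continuous_const continuous_snd).inter
      (isOpen_lt (continuous_fst.add continuous_snd) continuous_const)))

lemma cU_mem_openU (p : ℤ × ℤ) : cU p ∈ openU p := by
  refine ⟨by norm_num [cU], by norm_num [cU], by simp only [cU]; linarith⟩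

lemma cD_mem_openD (p : ℤ × ℤ) : cD p ∈ openD p := by
  refine ⟨by norm_num [cD], by norm_num [cD], by simp only [cD]; linarith⟩

lemma openU_subset_triU (p : ℤ × ℤ) : openU p ⊆ triU p := by
  rw [triU_eq]; rintro z ⟨h1, h2, h3⟩; exact ⟨le_of_lt h1, le_of_lt h2, le_of_lt h3⟩

lemma openD_subset_triD (p : ℤ × ℤ) : openD p ⊆ triD p := by
  rw [triD_eq]; rintro z ⟨h1, h2, h3⟩; exact ⟨le_of_lt h1, le_of_lt h2, le_of_lt h3⟩

lemma openU_subset_interior {L : Loz} : openU L.base ⊆ interior L.set := by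
  apply interior_maximal _ (isOpen_openU _)
  refine (openU_subset_triU _).trans ?_
  rw [Loz.set_eq]; exact Set.subset_union_left

lemma openD_subset_interior {L : Loz} : openD L.dbase ⊆ interior L.set := by
  apply interior_maximal _ (isOpen_openD _)
  refine (openD_subset_triD _).trans ?_
  rw [Loz.set_eq]; exact Set.subset_union_right

/-! ### the reflection σ -/

lemma σmap_invol (b : ℤ) : Function.Involutive (σmap b) := by
  intro z
  simp only [σmap]
  exact Prod.ext (by ring) rfl

lemma image_σ (b : ℤ) (S : Set (ℝ × ℝ)) : σmap b '' S = {z | σmap b z ∈ S} := by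
  ext z
  constructor
  · rintro ⟨w, hw, rfl⟩
    simpa [σmap_invol b w] using hw
  · intro hz
    exact ⟨σmap b z, hz, σmap_invol b z⟩

lemma σ_triU (b : ℤ) (p : ℤ × ℤ) :
    σmap b '' triU p = triU (b - p.1 - p.2 - 2, p.2) := by
  rw [image_σ, triU_eq, triU_eq]
  ext z
  simp only [Set.mem_setOf_eq, σmap]
  push_cast
  constructor
  · rintro ⟨h1, h2, h3⟩; exact ⟨by linarith, by linarith, by linarith⟩
  · rintro ⟨h1, h2, h3⟩; exact ⟨by linarith, by linarith, by linarith⟩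

lemma σ_triD (b : ℤ) (p : ℤ × ℤ) :
    σmap b '' triD p = triD (b - p.1 - p.2 - 1, p.2) := by
  rw [image_σ, triD_eq, triD_eq]
  ext z
  simp only [Set.mem_setOf_eq, σmap]
  push_cast
  constructor
  · rintro ⟨h1, h2, h3⟩; exact ⟨by linarith, by linarith, by linarith⟩
  · rintro ⟨h1, h2, h3⟩; exact ⟨by linarith, by linarith, by linarith⟩

def lozSigma (b : ℤ) : Loz → Loz
  | .t1 p => .t1 (b - p.1 - p.2 - 2, p.2)
  | .t2 p => .t3 (b - p.1 - p.2 - 2, p.2)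
  | .t3 p => .t2 (b - p.1 - p.2 - 2, p.2)

lemma lozSigma_set (b : ℤ) (L : Loz) : (lozSigma b L).set = σmap b '' L.set := by
  cases L with
  | t1 p =>
      show triU (b - p.1 - p.2 - 2, p.2) ∪ triD (b - p.1 - p.2 - 2, p.2 + 1) =
        σmap b '' (triU p ∪ triD (p.1, p.2 + 1))
      rw [Set.image_union, σ_triU, σ_triD]
      have e : (b - p.1 - (p.2 + 1) - 1 : ℤ) = b - p.1 - p.2 - 2 := by ring
      rw [e]
  | t2 p =>
      show triU (b - p.1 - p.2 - 2, p.2) ∪ triD (b - p.1 - p.2 - 2 + 1, p.2) =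
        σmap b '' (triU p ∪ triD p)
      rw [Set.image_union, σ_triU, σ_triD]
      have e : (b - p.1 - p.2 - 1 : ℤ) = b - p.1 - p.2 - 2 + 1 := by ring
      rw [e]
  | t3 p =>
      show triU (b - p.1 - p.2 - 2, p.2) ∪ triD (b - p.1 - p.2 - 2, p.2) =
        σmap b '' (triU p ∪ triD (p.1 + 1, p.2))
      rw [Set.image_union, σ_triU, σ_triD]
      have e : (b - (p.1 + 1) - p.2 - 1 : ℤ) = b - p.1 - p.2 - 2 := by ring
      rw [e]

lemma lozSigma_invol (b : ℤ) : Function.Involutive (lozSigma b) := by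
  intro L
  cases L <;> simp only [lozSigma] <;> congr 1 <;> exact Prod.ext (by dsimp; ring) rfl

lemma σ_hexagon (a b c : ℤ) (ha : 1 ≤ a) (hb : 1 ≤ b) (hc : 1 ≤ c) :
    σmap b '' hexagon a b c = hexagon c b a := by
  rw [image_σ, hexagon_eq a b c ha hb hc, hexagon_eq c b a hc hb ha]
  ext z
  simp only [region, Set.mem_setOf_eq, σmap]
  constructor
  · rintro ⟨h1, h2, h3, h4, h5, h6⟩
    refine ⟨by linarith, by linarith, by linarith, by linarith, by linarith, by linarith⟩
  · rintro ⟨h1, h2, h3, h4, h5, h6⟩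
    refine ⟨by linarith, by linarith, by linarith, by linarith, by linarith, by linarith⟩

/-! ### lattice point sets -/

noncomputable def UF (a b c : ℤ) : Finset (ℤ × ℤ) :=
  ((Finset.Icc (-a) (b - 1)) ×ˢ (Finset.Icc 0 (a + c - 1))).filter
    (fun p => -1 ≤ p.1 + p.2 ∧ p.1 + p.2 ≤ b + c - 2)

noncomputable def DF (a b c : ℤ) : Finset (ℤ × ℤ) :=
  ((Finset.Icc (-a) (b - 1)) ×ˢ (Finset.Icc 0 (a + c - 1))).filter
    (fun p => 0 ≤ p.1 + p.2 ∧ p.1 + p.2 ≤ b + c - 1)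

lemma mem_UF {a b c : ℤ} {p : ℤ × ℤ} :
    p ∈ UF a b c ↔ (-a ≤ p.1 ∧ p.1 ≤ b - 1 ∧ 0 ≤ p.2 ∧ p.2 ≤ a + c - 1 ∧
      -1 ≤ p.1 + p.2 ∧ p.1 + p.2 ≤ b + c - 2) := by
  simp only [UF, Finset.mem_filter, Finset.mem_product, Finset.mem_Icc]
  omega

lemma mem_DF {a b c : ℤ} {p : ℤ × ℤ} :
    p ∈ DF a b c ↔ (-a ≤ p.1 ∧ p.1 ≤ b - 1 ∧ 0 ≤ p.2 ∧ p.2 ≤ a + c - 1 ∧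
      0 ≤ p.1 + p.2 ∧ p.1 + p.2 ≤ b + c - 1) := by
  simp only [DF, Finset.mem_filter, Finset.mem_product, Finset.mem_Icc]
  omega

/-! ### vertices of triangles -/

lemma vertU1 (p : ℤ × ℤ) : (((p.1 : ℝ) + 1, (p.2 : ℝ))) ∈ triU p :=
  subset_convexHull ℝ _ (by simp)
lemma vertU2 (p : ℤ × ℤ) : (((p.1 : ℝ) + 1, (p.2 : ℝ) + 1)) ∈ triU p :=
  subset_convexHull ℝ _ (by simp)
lemma vertU3 (p : ℤ × ℤ) : (((p.1 : ℝ), (p.2 : ℝ) + 1)) ∈ triU p :=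
  subset_convexHull ℝ _ (by simp)
lemma vertD1 (p : ℤ × ℤ) : (((p.1 : ℝ), (p.2 : ℝ))) ∈ triD p :=
  subset_convexHull ℝ _ (by simp)
lemma vertD2 (p : ℤ × ℤ) : (((p.1 : ℝ) + 1, (p.2 : ℝ))) ∈ triD p :=
  subset_convexHull ℝ _ (by simp)
lemma vertD3 (p : ℤ × ℤ) : (((p.1 : ℝ), (p.2 : ℝ) + 1)) ∈ triD p :=
  subset_convexHull ℝ _ (by simp)

/-! ### tilings -/

section Tiling

variable {a b c : ℤ} {T : LozTiling a b c} {L L' : Loz} {p : ℤ × ℤ}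

lemma tile_subset (hL : L ∈ T.tiles) : L.set ⊆ hexagon a b c := by
  rw [← T.cover]
  exact Set.subset_biUnion_of_mem hL

lemma base_mem_UF (ha : 1 ≤ a) (hb : 1 ≤ b) (hc : 1 ≤ c) (hL : L ∈ T.tiles) : L.base ∈ UF a b c := by
  have hsub := (tile_subset hL).trans (hexagon_eq a b c ha hb hc).le
  set p := L.base with hp
  have m1 := hsub (show _ ∈ L.set by rw [Loz.set_eq]; exact Or.inl (vertU1 p))
  have m2 := hsub (show _ ∈ L.set by rw [Loz.set_eq]; exact Or.inl (vertU2 p))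
  have m3 := hsub (show _ ∈ L.set by rw [Loz.set_eq]; exact Or.inl (vertU3 p))
  obtain ⟨a1, a2, a3, a4, a5, a6⟩ := m1
  obtain ⟨b1, b2, b3, b4, b5, b6⟩ := m2
  obtain ⟨c1, c2, c3, c4, c5, c6⟩ := m3
  dsimp at a1 a2 a3 a4 a5 a6 b1 b2 b3 b4 b5 b6 c1 c2 c3 c4 c5 c6
  rw [mem_UF]
  refine ⟨?_, ?_, ?_, ?_, ?_, ?_⟩
  · exact_mod_cast c3
  · have : (p.1 : ℝ) + 1 ≤ b := a4
    exact_mod_cast show (p.1 : ℝ) ≤ (b : ℝ) - 1 by linarith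
  · exact_mod_cast a1
  · exact_mod_cast show (p.2 : ℝ) ≤ (a : ℝ) + c - 1 by linarith
  · exact_mod_cast show (-1 : ℝ) ≤ (p.1 : ℝ) + p.2 by linarith
  · exact_mod_cast show (p.1 : ℝ) + p.2 ≤ (b : ℝ) + c - 2 by linarith

lemma dbase_mem_DF (ha : 1 ≤ a) (hb : 1 ≤ b) (hc : 1 ≤ c) (hL : L ∈ T.tiles) : L.dbase ∈ DF a b c := by
  have hsub := (tile_subset hL).trans (hexagon_eq a b c ha hb hc).le
  set q := L.dbase with hq
  have m1 := hsub (show _ ∈ L.set by rw [Loz.set_eq]; exact Or.inr (vertD1 q))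
  have m2 := hsub (show _ ∈ L.set by rw [Loz.set_eq]; exact Or.inr (vertD2 q))
  have m3 := hsub (show _ ∈ L.set by rw [Loz.set_eq]; exact Or.inr (vertD3 q))
  obtain ⟨a1, a2, a3, a4, a5, a6⟩ := m1
  obtain ⟨b1, b2, b3, b4, b5, b6⟩ := m2
  obtain ⟨c1, c2, c3, c4, c5, c6⟩ := m3
  dsimp at a1 a2 a3 a4 a5 a6 b1 b2 b3 b4 b5 b6 c1 c2 c3 c4 c5 c6
  rw [mem_DF]
  refine ⟨?_, ?_, ?_, ?_, ?_, ?_⟩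
  · exact_mod_cast a3
  · exact_mod_cast show (q.1 : ℝ) ≤ (b : ℝ) - 1 by linarith
  · exact_mod_cast a1
  · exact_mod_cast show (q.2 : ℝ) ≤ (a : ℝ) + c - 1 by linarith
  · exact_mod_cast a5
  · exact_mod_cast show (q.1 : ℝ) + q.2 ≤ (b : ℝ) + c - 1 by linarith

lemma base_injOn (hL : L ∈ T.tiles) (hL' : L' ∈ T.tiles) (h : L.base = L'.base) : L = L' := by
  by_contra hne
  have hd := T.disj hL hL' hne
  have h1 : cU L.base ∈ interior L.set := openU_subset_interior (cU_mem_openU _)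
  have h2 : cU L.base ∈ interior L'.set := by
    rw [h]; exact openU_subset_interior (cU_mem_openU _)
  exact Set.disjoint_left.mp hd h1 h2

lemma dbase_injOn (hL : L ∈ T.tiles) (hL' : L' ∈ T.tiles) (h : L.dbase = L'.dbase) : L = L' := by
  by_contra hne
  have hd := T.disj hL hL' hne
  have h1 : cD L.dbase ∈ interior L.set := openD_subset_interior (cD_mem_openD _)
  have h2 : cD L.dbase ∈ interior L'.set := by
    rw [h]; exact openD_subset_interior (cD_mem_openD _)
  exact Set.disjoint_left.mp hd h1 h2

lemma cU_mem_region (hp : p ∈ UF a b c) : cU p ∈ region a b c := by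
  rw [mem_UF] at hp
  obtain ⟨i1, i2, i3, i4, i5, i6⟩ := hp
  have r1 : (-(a : ℝ)) ≤ p.1 := by exact_mod_cast i1
  have r2 : (p.1 : ℝ) ≤ (b : ℝ) - 1 := by exact_mod_cast i2
  have r3 : (0 : ℝ) ≤ p.2 := by exact_mod_cast i3
  have r4 : (p.2 : ℝ) ≤ (a : ℝ) + c - 1 := by exact_mod_cast i4
  have r5 : (-1 : ℝ) ≤ (p.1 : ℝ) + p.2 := by exact_mod_cast i5
  have r6 : (p.1 : ℝ) + p.2 ≤ (b : ℝ) + c - 2 := by exact_mod_cast i6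
  exact ⟨by simp [cU]; linarith, by simp [cU]; linarith, by simp [cU]; linarith,
    by simp [cU]; linarith, by simp [cU]; linarith, by simp [cU]; linarith⟩

lemma cD_mem_region (hp : p ∈ DF a b c) : cD p ∈ region a b c := by
  rw [mem_DF] at hp
  obtain ⟨i1, i2, i3, i4, i5, i6⟩ := hp
  have r1 : (-(a : ℝ)) ≤ p.1 := by exact_mod_cast i1
  have r2 : (p.1 : ℝ) ≤ (b : ℝ) - 1 := by exact_mod_cast i2
  have r3 : (0 : ℝ) ≤ p.2 := by exact_mod_cast i3
  have r4 : (p.2 : ℝ) ≤ (a : ℝ) + c - 1 := by exact_mod_cast i4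
  have r5 : (0 : ℝ) ≤ (p.1 : ℝ) + p.2 := by exact_mod_cast i5
  have r6 : (p.1 : ℝ) + p.2 ≤ (b : ℝ) + c - 1 := by exact_mod_cast i6
  exact ⟨by simp [cD]; linarith, by simp [cD]; linarith, by simp [cD]; linarith,
    by simp [cD]; linarith, by simp [cD]; linarith, by simp [cD]; linarith⟩

lemma exists_tile_base (ha : 1 ≤ a) (hb : 1 ≤ b) (hc : 1 ≤ c) (T : LozTiling a b c) (hp : p ∈ UF a b c) :
    ∃ L ∈ T.tiles, L.base = p := by
  have hmem : cU p ∈ hexagon a b c := by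
    rw [hexagon_eq a b c ha hb hc]
    exact cU_mem_region hp
  rw [← T.cover] at hmem
  obtain ⟨L, hL, hm⟩ := Set.mem_iUnion₂.mp hmem
  exact ⟨L, hL, base_eq_of_cU_mem hm⟩

lemma exists_tile_dbase (ha : 1 ≤ a) (hb : 1 ≤ b) (hc : 1 ≤ c) (T : LozTiling a b c) (hp : p ∈ DF a b c) :
    ∃ L ∈ T.tiles, L.dbase = p := by
  have hmem : cD p ∈ hexagon a b c := by
    rw [hexagon_eq a b c ha hb hc]
    exact cD_mem_region hp
  rw [← T.cover] at hmem
  obtain ⟨L, hL, hm⟩ := Set.mem_iUnion₂.mp hmem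
  exact ⟨L, hL, dbase_eq_of_cD_mem hm⟩

lemma tiles_finite (ha : 1 ≤ a) (hb : 1 ≤ b) (hc : 1 ≤ c) (T : LozTiling a b c) : T.tiles.Finite := by
  apply Set.Finite.of_finite_image (f := Loz.base)
  · exact Set.Finite.subset (UF a b c).finite_toSet
      (by rintro q ⟨L, hL, rfl⟩; exact base_mem_UF ha hb hc hL)
  · intro L hL L' hL' h
    exact base_injOn hL hL' h

end Tiling

/-! ### lattice sums -/

lemma sum_Icc_int {M : Type*} [AddCommMonoid M] (l : ℤ) (n : ℕ) (f : ℤ → M) :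
    ∑ y ∈ Finset.Icc l (l + n - 1), f y = ∑ i ∈ Finset.range n, f (l + i) := by
  apply Finset.sum_nbij' (i := fun y => (y - l).toNat) (j := fun i => l + i)
  · intro y hy
    rw [Finset.mem_Icc] at hy
    rw [Finset.mem_range]
    omega
  · intro i hi
    rw [Finset.mem_range] at hi
    rw [Finset.mem_Icc]
    omega
  · intro y hy
    rw [Finset.mem_Icc] at hy
    omega
  · intro i hi
    rw [Finset.mem_range] at hi
    omega
  · intro y hy
    rw [Finset.mem_Icc] at hy
    congr 1
    omega

lemma DF_filter_eq (a b c : ℤ) :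
    (DF a b c).filter (fun p => p.1 + p.2 ≤ b + c - 2) =
      (UF a b c).filter (fun p => 0 ≤ p.1 + p.2) := by
  ext p
  simp only [Finset.mem_filter, mem_DF, mem_UF]
  omega

lemma DF_filter_top (a b c : ℤ) (ha : 1 ≤ a) (hb : 1 ≤ b) (hc : 1 ≤ c) :
    (DF a b c).filter (fun p => ¬ p.1 + p.2 ≤ b + c - 2) =
      (Finset.Icc c (a + c - 1)).image (fun y => (b + c - 1 - y, y)) := by
  ext p
  simp only [Finset.mem_filter, mem_DF, Finset.mem_image, Finset.mem_Icc, Prod.ext_iff]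
  constructor
  · rintro ⟨⟨h1, h2, h3, h4, h5, h6⟩, h7⟩
    exact ⟨p.2, by omega, by omega, rfl⟩
  · rintro ⟨y, hy, h1, h2⟩
    omega

lemma UF_filter_bot (a b c : ℤ) (ha : 1 ≤ a) (hb : 1 ≤ b) (hc : 1 ≤ c) :
    (UF a b c).filter (fun p => ¬ 0 ≤ p.1 + p.2) =
      (Finset.Icc (0 : ℤ) (a - 1)).image (fun y => (-1 - y, y)) := by
  ext p
  simp only [Finset.mem_filter, mem_UF, Finset.mem_image, Finset.mem_Icc, Prod.ext_iff]
  constructor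
  · rintro ⟨⟨h1, h2, h3, h4, h5, h6⟩, h7⟩
    exact ⟨p.2, by omega, by omega, rfl⟩
  · rintro ⟨y, hy, h1, h2⟩
    omega

lemma sum_DF_sub_sum_UF (a b c : ℤ) (ha : 1 ≤ a) (hb : 1 ≤ b) (hc : 1 ≤ c) :
    (∑ q ∈ DF a b c, q.1) - (∑ p ∈ UF a b c, p.1) = a * b := by
  classical
  have hD := Finset.sum_filter_add_sum_filter_not (DF a b c)
    (fun p => p.1 + p.2 ≤ b + c - 2) (fun p => p.1)
  have hU := Finset.sum_filter_add_sum_filter_not (UF a b c)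
    (fun p => 0 ≤ p.1 + p.2) (fun p => p.1)
  rw [DF_filter_eq] at hD
  rw [DF_filter_top a b c ha hb hc] at hD
  rw [UF_filter_bot a b c ha hb hc] at hU
  have hinj1 : ∀ y ∈ Finset.Icc c (a + c - 1), ∀ y' ∈ Finset.Icc c (a + c - 1),
      ((b + c - 1 - y, y) : ℤ × ℤ) = (b + c - 1 - y', y') → y = y' := by
    intro y _ y' _ h
    exact (Prod.ext_iff.mp h).2
  have hinj2 : ∀ y ∈ Finset.Icc (0 : ℤ) (a - 1), ∀ y' ∈ Finset.Icc (0 : ℤ) (a - 1),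
      ((-1 - y, y) : ℤ × ℤ) = (-1 - y', y') → y = y' := by
    intro y _ y' _ h
    exact (Prod.ext_iff.mp h).2
  rw [Finset.sum_image hinj1] at hD
  rw [Finset.sum_image hinj2] at hU
  have e1 : (Finset.Icc c (a + c - 1)) = Finset.Icc c (c + (a.toNat : ℤ) - 1) := by
    congr 1
    omega
  have e2 : (Finset.Icc (0 : ℤ) (a - 1)) = Finset.Icc 0 (0 + (a.toNat : ℤ) - 1) := by
    congr 1
    omega
  rw [e1, sum_Icc_int c a.toNat] at hD
  rw [e2, sum_Icc_int 0 a.toNat] at hU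
  dsimp only at hD hU
  have key : (∑ i ∈ Finset.range a.toNat, (b + c - 1 - (c + (i : ℤ))))
      - (∑ i ∈ Finset.range a.toNat, (-1 - ((0 : ℤ) + (i : ℤ)))) = a * b := by
    rw [← Finset.sum_sub_distrib]
    have : ∀ i ∈ Finset.range a.toNat,
        (b + c - 1 - (c + (i : ℤ))) - (-1 - ((0 : ℤ) + (i : ℤ))) = b := by
      intro i _
      ring
    rw [Finset.sum_congr rfl this, Finset.sum_const, nsmul_eq_mul]
    have : ((a.toNat : ℤ)) = a := by omega
    rw [Finset.card_range, this]
  linarith [hD, hU, key]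


/-! ### counting type-3 tiles -/

section Counting

attribute [local instance] Classical.propDecidable

variable {a b c : ℤ} {p : ℤ × ℤ}

lemma dbase1_sub_base1 (L : Loz) :
    (L.dbase.1 - L.base.1 : ℤ) = if (∃ p, L = Loz.t3 p) then 1 else 0 := by
  cases L with
  | t1 p =>
      rw [if_neg (by rintro ⟨q, h⟩; exact Loz.noConfusion h)]
      simp [Loz.base, Loz.dbase]
  | t2 p =>
      rw [if_neg (by rintro ⟨q, h⟩; exact Loz.noConfusion h)]
      simp [Loz.base, Loz.dbase]
  | t3 p =>
      rw [if_pos ⟨p, rfl⟩]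
      simp [Loz.base, Loz.dbase]

lemma n3_card (ha : 1 ≤ a) (hb : 1 ≤ b) (hc : 1 ≤ c) (T : LozTiling a b c) :
    ((((UF a b c).filter (fun p => Loz.t3 p ∈ T.tiles)).card : ℤ)) = a * b := by
  set TF := (tiles_finite ha hb hc T).toFinset with hTF
  have hmem : ∀ {L : Loz}, L ∈ TF ↔ L ∈ T.tiles := fun {L} => Set.Finite.mem_toFinset _
  have h1 : ∑ L ∈ TF, (L.dbase.1 : ℤ) = ∑ q ∈ DF a b c, (q.1 : ℤ) := by
    apply Finset.sum_bij (i := fun L _ => L.dbase)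
    · intro L hL; exact dbase_mem_DF ha hb hc (hmem.mp hL)
    · intro L hL L' hL' h; exact dbase_injOn (hmem.mp hL) (hmem.mp hL') h
    · intro q hq
      obtain ⟨L, hL, hLq⟩ := exists_tile_dbase ha hb hc T hq
      exact ⟨L, hmem.mpr hL, hLq⟩
    · intro L _; rfl
  have h2 : ∑ L ∈ TF, (L.base.1 : ℤ) = ∑ q ∈ UF a b c, (q.1 : ℤ) := by
    apply Finset.sum_bij (i := fun L _ => L.base)
    · intro L hL; exact base_mem_UF ha hb hc (hmem.mp hL)
    · intro L hL L' hL' h; exact base_injOn (hmem.mp hL) (hmem.mp hL') h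
    · intro q hq
      obtain ⟨L, hL, hLq⟩ := exists_tile_base ha hb hc T hq
      exact ⟨L, hmem.mpr hL, hLq⟩
    · intro L _; rfl
  have h3 : ∑ L ∈ TF, ((L.dbase.1 - L.base.1 : ℤ)) =
      ((TF.filter (fun L => ∃ p, L = Loz.t3 p)).card : ℤ) := by
    rw [Finset.sum_congr rfl (fun L _ => dbase1_sub_base1 L)]
    exact Finset.sum_boole _ _
  have h4 : (TF.filter (fun L => ∃ p, L = Loz.t3 p)).card =
      ((UF a b c).filter (fun p => Loz.t3 p ∈ T.tiles)).card := by
    apply Finset.card_nbij' (i := Loz.base) (j := Loz.t3)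
    · intro L hL
      rw [Finset.mem_coe, Finset.mem_filter] at hL
      obtain ⟨hL1, q, rfl⟩ := hL
      rw [Finset.mem_coe, Finset.mem_filter]
      exact ⟨base_mem_UF ha hb hc (hmem.mp hL1), hmem.mp hL1⟩
    · intro q hq
      rw [Finset.mem_coe, Finset.mem_filter] at hq
      rw [Finset.mem_coe, Finset.mem_filter]
      exact ⟨hmem.mpr hq.2, ⟨q, rfl⟩⟩
    · intro L hL
      rw [Finset.mem_coe, Finset.mem_filter] at hL
      obtain ⟨_, q, rfl⟩ := hL
      rfl
    · intro q hq
      rfl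
  have h5 := sum_DF_sub_sum_UF a b c ha hb hc
  rw [Finset.sum_sub_distrib, h1, h2] at h3
  rw [← h4]
  linarith [h3, h5]

lemma exists_base_cases (ha : 1 ≤ a) (hb : 1 ≤ b) (hc : 1 ≤ c) (T : LozTiling a b c)
    (hp : p ∈ UF a b c) :
    Loz.t1 p ∈ T.tiles ∨ Loz.t2 p ∈ T.tiles ∨ Loz.t3 p ∈ T.tiles := by
  obtain ⟨L, hL, hbase⟩ := exists_tile_base ha hb hc T hp
  cases L with
  | t1 q => rw [show q = p from hbase] at hL; exact Or.inl hL
  | t2 q => rw [show q = p from hbase] at hL; exact Or.inr (Or.inl hL)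
  | t3 q => rw [show q = p from hbase] at hL; exact Or.inr (Or.inr hL)

lemma not_t2_iff (ha : 1 ≤ a) (hb : 1 ≤ b) (hc : 1 ≤ c) (T : LozTiling a b c)
    (hp : p ∈ UF a b c) :
    (¬ Loz.t2 p ∈ T.tiles) ↔ (Loz.t1 p ∈ T.tiles ∨ Loz.t3 p ∈ T.tiles) := by
  constructor
  · intro h
    rcases exists_base_cases ha hb hc T hp with h1 | h2 | h3
    · exact Or.inl h1
    · exact absurd h2 h
    · exact Or.inr h3
  · rintro (h1 | h3) h2
    · exact Loz.noConfusion (base_injOn h1 h2 rfl)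
    · exact Loz.noConfusion (base_injOn h3 h2 rfl)

lemma not_t1_and_t3 {T : LozTiling a b c} (h1 : Loz.t1 p ∈ T.tiles)
    (h3 : Loz.t3 p ∈ T.tiles) : False :=
  Loz.noConfusion (base_injOn h1 h3 rfl)

end Counting

/-! ### the reflected tiling -/

def σHomeo (b : ℤ) : ℝ × ℝ ≃ₜ ℝ × ℝ where
  toEquiv := (σmap_invol b).toPerm _
  continuous_toFun := by
    show Continuous (σmap b)
    unfold σmap
    fun_prop
  continuous_invFun := by
    show Continuous (σmap b)
    unfold σmap
    fun_prop

lemma interior_σ_image (b : ℤ) (S : Set (ℝ × ℝ)) :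
    interior (σmap b '' S) = σmap b '' interior S :=
  ((σHomeo b).image_interior S).symm

def sigmaTiling {a b c : ℤ} (ha : 1 ≤ a) (hb : 1 ≤ b) (hc : 1 ≤ c)
    (T : LozTiling a b c) : LozTiling c b a where
  tiles := lozSigma b '' T.tiles
  disj := by
    rintro _ ⟨L, hL, rfl⟩ _ ⟨L', hL', rfl⟩ hne
    have hLne : L ≠ L' := fun h => hne (h ▸ rfl)
    have hd := T.disj hL hL' hLne
    rw [lozSigma_set, lozSigma_set, interior_σ_image, interior_σ_image]
    exact Set.disjoint_image_of_injective (σmap_invol b).injective hd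
  cover := by
    rw [Set.biUnion_image]
    have : ∀ L ∈ T.tiles, (lozSigma b L).set = σmap b '' L.set := fun L _ => lozSigma_set b L
    rw [Set.iUnion₂_congr this, ← Set.image_iUnion₂, T.cover, σ_hexagon a b c ha hb hc]

lemma mem_sigmaTiling {a b c : ℤ} {ha : 1 ≤ a} {hb : 1 ≤ b} {hc : 1 ≤ c}
    {T : LozTiling a b c} {L : Loz} :
    L ∈ (sigmaTiling ha hb hc T).tiles ↔ lozSigma b L ∈ T.tiles := by
  show L ∈ lozSigma b '' T.tiles ↔ _
  constructor
  · rintro ⟨M, hM, rfl⟩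
    rw [lozSigma_invol b M]
    exact hM
  · intro h
    exact ⟨lozSigma b L, h, lozSigma_invol b L⟩

lemma Loz.set_injective : Function.Injective Loz.set := by
  intro L L' h
  have h1 : cU L.base ∈ L'.set := by rw [← h]; exact cU_base_mem L
  have h2 : cD L.dbase ∈ L'.set := by rw [← h]; exact cD_dbase_mem L
  have hbase : L'.base = L.base := base_eq_of_cU_mem h1
  have hdbase : L'.dbase = L.dbase := dbase_eq_of_cD_mem h2
  cases L <;> cases L' <;>
    simp only [Loz.base, Loz.dbase, Prod.ext_iff] at hbase hdbase <;>
    first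
      | (congr 1; exact Prod.ext (by omega) (by omega))
      | (exfalso; omega)

lemma sigmaTiling_invol {a b c : ℤ} (ha : 1 ≤ a) (hb : 1 ≤ b) (hc : 1 ≤ c)
    (T : LozTiling a b c) :
    sigmaTiling hc hb ha (sigmaTiling ha hb hc T) = T := by
  obtain ⟨tiles, disj, cover⟩ := T
  have : lozSigma b '' (lozSigma b '' tiles) = tiles := by
    rw [← Set.image_comp]
    simp [Function.comp_def, lozSigma_invol b _]
  show LozTiling.mk _ _ _ = LozTiling.mk _ _ _
  congr 1

/-! ### interaction counting -/

section Nu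

attribute [local instance] Classical.propDecidable

variable {a b c : ℤ}

lemma triU_subset_set_base (L : Loz) : triU L.base ⊆ L.set := by
  rw [Loz.set_eq]; exact Set.subset_union_left

lemma interact_card (ha : 1 ≤ a) (hb : 1 ≤ b) (hc : 1 ≤ c) (T T' : LozTiling a b c) :
    ((((tiles_finite ha hb hc T).toFinset) ×ˢ ((tiles_finite ha hb hc T').toFinset)).filter
      (fun LL : Loz × Loz => LozInteract LL.1 LL.2)).card =
    ((UF a b c).filter
      (fun p => Loz.t3 p ∈ T.tiles ∧ (Loz.t1 p ∈ T'.tiles ∨ Loz.t3 p ∈ T'.tiles))).card := by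
  apply Finset.card_bij' (i := fun LL _ => LL.1.base)
    (j := fun p _ => ((Loz.t3 p, if Loz.t1 p ∈ T'.tiles then Loz.t1 p else Loz.t3 p) : Loz × Loz))
  · intro LL hLL
    rw [Finset.mem_filter, Finset.mem_product, Set.Finite.mem_toFinset,
      Set.Finite.mem_toFinset] at hLL
    obtain ⟨⟨hT, hT'⟩, ⟨p, hL1, hsub⟩, htype⟩ := hLL
    have hb2 : LL.2.base = p := base_eq_of_cU_mem (hsub (cU_mem_triU p))
    rw [hL1] at hT ⊢
    rw [Finset.mem_filter]
    refine ⟨base_mem_UF ha hb hc hT, hT, ?_⟩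
    rcases htype with ⟨p', hp'⟩ | ⟨p', hp'⟩
    · left
      have hpp : p' = p := by rw [hp'] at hb2; exact hb2
      rw [hp', hpp] at hT'
      exact hT'
    · right
      have hpp : p' = p := by rw [hp'] at hb2; exact hb2
      rw [hp', hpp] at hT'
      exact hT'
  · intro p hp
    rw [Finset.mem_filter] at hp
    obtain ⟨hpU, hp3, hor⟩ := hp
    rw [Finset.mem_filter, Finset.mem_product, Set.Finite.mem_toFinset,
      Set.Finite.mem_toFinset]
    refine ⟨⟨hp3, ?_⟩, ⟨p, rfl, ?_⟩, ?_⟩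
    · dsimp only
      split_ifs with h
      · exact h
      · rcases hor with h1 | h3
        · exact absurd h1 h
        · exact h3
    · dsimp only
      split_ifs with h
      · exact triU_subset_set_base (Loz.t1 p)
      · exact triU_subset_set_base (Loz.t3 p)
    · dsimp only
      split_ifs with h
      · exact Or.inl ⟨p, rfl⟩
      · exact Or.inr ⟨p, rfl⟩
  · intro LL hLL
    rw [Finset.mem_filter, Finset.mem_product, Set.Finite.mem_toFinset,
      Set.Finite.mem_toFinset] at hLL
    obtain ⟨⟨hT, hT'⟩, ⟨p, hL1, hsub⟩, htype⟩ := hLL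
    have hb2 : LL.2.base = p := base_eq_of_cU_mem (hsub (cU_mem_triU p))
    have hbase1 : LL.1.base = p := by rw [hL1]; rfl
    rw [hbase1]
    refine Prod.ext ?_ ?_
    · dsimp only
      exact hL1.symm
    · dsimp only
      split_ifs with h
      · exact base_injOn h hT' hb2.symm
      · rcases htype with ⟨p', hp'⟩ | ⟨p', hp'⟩
        · exfalso
          have hpp : p' = p := by rw [hp'] at hb2; exact hb2
          rw [hp', hpp] at hT'
          exact h hT'
        · have hpp : p' = p := by rw [hp'] at hb2; exact hb2
          rw [hp', hpp]
  · intro p hp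
    rfl

lemma interact_split (ha : 1 ≤ a) (hb : 1 ≤ b) (hc : 1 ≤ c) (T T' : LozTiling a b c) :
    ((UF a b c).filter
        (fun p => Loz.t3 p ∈ T.tiles ∧ (Loz.t1 p ∈ T'.tiles ∨ Loz.t3 p ∈ T'.tiles))).card +
      ((UF a b c).filter (fun p => Loz.t3 p ∈ T.tiles ∧ Loz.t2 p ∈ T'.tiles)).card =
      ((UF a b c).filter (fun p => Loz.t3 p ∈ T.tiles)).card := by
  rw [← Finset.filter_filter (fun p => Loz.t3 p ∈ T.tiles)
    (fun p => (Loz.t1 p ∈ T'.tiles ∨ Loz.t3 p ∈ T'.tiles)),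
    ← Finset.filter_filter (fun p => Loz.t3 p ∈ T.tiles) (fun p => Loz.t2 p ∈ T'.tiles)]
  have e : ((UF a b c).filter (fun p => Loz.t3 p ∈ T.tiles)).filter
        (fun p => (Loz.t1 p ∈ T'.tiles ∨ Loz.t3 p ∈ T'.tiles)) =
      ((UF a b c).filter (fun p => Loz.t3 p ∈ T.tiles)).filter
        (fun p => ¬ Loz.t2 p ∈ T'.tiles) := by
    apply Finset.filter_congr
    intro p hp
    rw [Finset.mem_filter] at hp
    exact (not_t2_iff ha hb hc T' hp.1).symm
  rw [e, add_comm]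
  exact Finset.card_filter_add_card_filter_not _

lemma Aset_sigma (ha : 1 ≤ a) (hb : 1 ≤ b) (hc : 1 ≤ c) (T T' : LozTiling a b c) :
    ((UF c b a).filter (fun p => Loz.t3 p ∈ (sigmaTiling ha hb hc T').tiles ∧
        Loz.t2 p ∈ (sigmaTiling ha hb hc T).tiles)).card =
    ((UF a b c).filter (fun p => Loz.t3 p ∈ T.tiles ∧ Loz.t2 p ∈ T'.tiles)).card := by
  apply Finset.card_nbij' (i := fun p : ℤ × ℤ => ((b - p.1 - p.2 - 2, p.2) : ℤ × ℤ))
    (j := fun p : ℤ × ℤ => ((b - p.1 - p.2 - 2, p.2) : ℤ × ℤ))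
  · intro p hp
    rw [Finset.mem_coe, Finset.mem_filter] at hp ⊢
    obtain ⟨hpU, h3, h2⟩ := hp
    rw [mem_sigmaTiling] at h3 h2
    refine ⟨?_, h2, h3⟩
    rw [mem_UF] at hpU ⊢
    dsimp only
    omega
  · intro p hp
    rw [Finset.mem_coe, Finset.mem_filter] at hp ⊢
    obtain ⟨hpU, h3, h2⟩ := hp
    have e : ((b - (b - p.1 - p.2 - 2) - p.2 - 2 : ℤ), p.2) = p := Prod.ext (by dsimp; omega) rfl
    refine ⟨?_, ?_, ?_⟩
    · rw [mem_UF] at hpU ⊢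
      dsimp only
      omega
    · rw [mem_sigmaTiling]
      show Loz.t2 (b - (b - p.1 - p.2 - 2) - p.2 - 2, p.2) ∈ T'.tiles
      rw [e]
      exact h2
    · rw [mem_sigmaTiling]
      show Loz.t3 (b - (b - p.1 - p.2 - 2) - p.2 - 2, p.2) ∈ T.tiles
      rw [e]
      exact h3
  · intro p _
    exact Prod.ext (by dsimp; omega) rfl
  · intro p _
    exact Prod.ext (by dsimp; omega) rfl

lemma pairs_card (k : ℕ) :
    (Finset.univ.filter (fun q : Fin k × Fin k => q.1 < q.2)).card = k * (k - 1) / 2 := by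
  set S := Finset.univ.filter (fun q : Fin k × Fin k => q.1 < q.2) with hS
  have h := Finset.card_eq_sum_card_fiberwise (f := fun q : Fin k × Fin k => q.2)
    (s := S) (t := Finset.univ) (fun x _ => Finset.mem_univ _)
  have h2 : ∀ j : Fin k, (S.filter (fun q => (fun q : Fin k × Fin k => q.2) q = j)).card
      = j.val := by
    intro j
    have e : S.filter (fun q => (fun q : Fin k × Fin k => q.2) q = j)
        = (Finset.univ.filter (fun i : Fin k => i < j)).image (fun i => (i, j)) := by
      ext q
      simp only [hS, Finset.mem_filter, Finset.mem_univ, true_and, Finset.mem_image,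
        Finset.filter_filter, Prod.ext_iff]
      constructor
      · rintro ⟨h1, h2⟩
        exact ⟨q.1, lt_of_lt_of_eq h1 h2, rfl, h2.symm⟩
      · rintro ⟨i, hi, h1, h2⟩
        subst h1
        subst h2
        exact ⟨hi, rfl⟩
    rw [e, Finset.card_image_of_injective _ (fun x y h => (Prod.ext_iff.mp h).1)]
    have e2 : Finset.univ.filter (fun i : Fin k => i < j) = Finset.Iio j := by ext i; simp
    rw [e2]
    exact Fin.card_Iio j
  rw [Finset.sum_congr rfl (fun j _ => h2 j)] at h
  rw [Fin.sum_univ_eq_sum_range (fun i => i) k] at h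
  have h3 := Finset.sum_range_id_mul_two k
  omega

lemma nuL_eq (ha : 1 ≤ a) (hb : 1 ≤ b) (hc : 1 ≤ c) {k : ℕ} (T : Fin k → LozTiling a b c) :
    (nuL T : ℤ) = ∑ ij ∈ Finset.univ.filter (fun q : Fin k × Fin k => q.1 < q.2),
      ((a * b : ℤ) - (((UF a b c).filter
        (fun p => Loz.t3 p ∈ (T ij.1).tiles ∧ Loz.t2 p ∈ (T ij.2).tiles)).card : ℤ)) := by
  set pairsF := Finset.univ.filter (fun q : Fin k × Fin k => q.1 < q.2) with hpairs
  set inner : Fin k × Fin k → Finset (Loz × Loz) := fun ij =>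
    (((tiles_finite ha hb hc (T ij.1)).toFinset) ×ˢ
      ((tiles_finite ha hb hc (T ij.2)).toFinset)).filter
        (fun LL : Loz × Loz => LozInteract LL.1 LL.2) with hinner
  set bigF := pairsF.biUnion (fun ij => (inner ij).image (fun LL => (ij, LL))) with hbig
  have hequiv : ∀ q : (Fin k × Fin k) × Loz × Loz,
      (q.1.1 < q.1.2 ∧ q.2.1 ∈ (T q.1.1).tiles ∧ q.2.2 ∈ (T q.1.2).tiles ∧
        LozInteract q.2.1 q.2.2) ↔ q ∈ bigF := by
    intro q
    rw [hbig, Finset.mem_biUnion]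
    constructor
    · rintro ⟨h1, h2, h3, h4⟩
      refine ⟨q.1, ?_, ?_⟩
      · rw [hpairs, Finset.mem_filter]
        exact ⟨Finset.mem_univ _, h1⟩
      · rw [Finset.mem_image]
        refine ⟨q.2, ?_, rfl⟩
        rw [hinner]
        dsimp only
        rw [Finset.mem_filter, Finset.mem_product, Set.Finite.mem_toFinset,
          Set.Finite.mem_toFinset]
        exact ⟨⟨h2, h3⟩, h4⟩
    · rintro ⟨ij, hij, hmem⟩
      rw [Finset.mem_image] at hmem
      obtain ⟨LL, hLL, heq⟩ := hmem
      subst heq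
      rw [hinner] at hLL
      dsimp only at hLL
      rw [Finset.mem_filter, Finset.mem_product, Set.Finite.mem_toFinset,
        Set.Finite.mem_toFinset] at hLL
      rw [hpairs, Finset.mem_filter] at hij
      exact ⟨hij.2, hLL.1.1, hLL.1.2, hLL.2⟩
  have hset : nuL T = bigF.card := by
    rw [nuL]
    calc Nat.card {q : (Fin k × Fin k) × Loz × Loz //
        q.1.1 < q.1.2 ∧ q.2.1 ∈ (T q.1.1).tiles ∧ q.2.2 ∈ (T q.1.2).tiles ∧
          LozInteract q.2.1 q.2.2}
        = Nat.card {q // q ∈ bigF} := Nat.card_congr (Equiv.subtypeEquivRight hequiv)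
      _ = bigF.card := Nat.card_eq_finsetCard _
  have hdisj : ∀ x ∈ pairsF, ∀ y ∈ pairsF, x ≠ y →
      Disjoint ((inner x).image (fun LL => (x, LL))) ((inner y).image (fun LL => (y, LL))) := by
    intro x _ y _ hxy
    rw [Finset.disjoint_left]
    rintro q hqx hqy
    rw [Finset.mem_image] at hqx hqy
    obtain ⟨l1, _, h1⟩ := hqx
    obtain ⟨l2, _, h2⟩ := hqy
    exact hxy (Prod.ext_iff.mp (h1.trans h2.symm)).1
  have hcard : bigF.card = ∑ ij ∈ pairsF, (inner ij).card := by
    rw [hbig, Finset.card_biUnion hdisj]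
    refine Finset.sum_congr rfl ?_
    intro ij _
    exact Finset.card_image_of_injective _ (fun u v huv => (Prod.ext_iff.mp huv).2)
  have hval : ∀ ij ∈ pairsF, ((inner ij).card : ℤ) =
      (a * b : ℤ) - (((UF a b c).filter
        (fun p => Loz.t3 p ∈ (T ij.1).tiles ∧ Loz.t2 p ∈ (T ij.2).tiles)).card : ℤ) := by
    intro ij _
    have h1 := interact_card ha hb hc (T ij.1) (T ij.2)
    have h2 := interact_split ha hb hc (T ij.1) (T ij.2)
    have h3 := n3_card ha hb hc (T ij.1)
    rw [hinner]
    dsimp only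
    rw [h1]
    omega
  rw [hset, hcard]
  push_cast
  exact Finset.sum_congr rfl hval

end Nu

/-! ### final assembly -/

def revFin {k : ℕ} (i : Fin k) : Fin k := ⟨k - 1 - i.val, by have := i.isLt; omega⟩

lemma revFin_revFin {k : ℕ} (i : Fin k) : revFin (revFin i) = i := by
  have := i.isLt
  apply Fin.ext
  simp only [revFin]
  omega

lemma revFin_lt {k : ℕ} {i j : Fin k} (h : i < j) : revFin j < revFin i := by
  have hi := i.isLt
  have hj := j.isLt
  rw [Fin.lt_def] at h ⊢
  simp only [revFin]
  omega

lemma nu_diff {a b c : ℤ} (ha : 1 ≤ a) (hb : 1 ≤ b) (hc : 1 ≤ c) {k : ℕ}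
    (T : Fin k → LozTiling a b c) :
    (nuL T : ℤ) - (nuL (fun i => sigmaTiling ha hb hc (T (revFin i))) : ℤ)
      = ((k * (k - 1) / 2 : ℕ) : ℤ) * (a * b - b * c) := by
  classical
  rw [nuL_eq ha hb hc T, nuL_eq hc hb ha (fun i => sigmaTiling ha hb hc (T (revFin i)))]
  set pairsF := Finset.univ.filter (fun q : Fin k × Fin k => q.1 < q.2) with hpairs
  have hA : ∀ ij : Fin k × Fin k, (((UF c b a).filter
      (fun p => Loz.t3 p ∈ (sigmaTiling ha hb hc (T (revFin ij.1))).tiles ∧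
        Loz.t2 p ∈ (sigmaTiling ha hb hc (T (revFin ij.2))).tiles)).card : ℤ)
      = (((UF a b c).filter (fun p => Loz.t3 p ∈ (T (revFin ij.2)).tiles ∧
          Loz.t2 p ∈ (T (revFin ij.1)).tiles)).card : ℤ) := by
    intro ij
    exact_mod_cast Aset_sigma ha hb hc (T (revFin ij.2)) (T (revFin ij.1))
  have hcongr : ∑ ij ∈ pairsF, ((c * b : ℤ) - (((UF c b a).filter
      (fun p => Loz.t3 p ∈ (sigmaTiling ha hb hc (T (revFin ij.1))).tiles ∧
        Loz.t2 p ∈ (sigmaTiling ha hb hc (T (revFin ij.2))).tiles)).card : ℤ))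
      = ∑ ij ∈ pairsF, ((c * b : ℤ) - (((UF a b c).filter
        (fun p => Loz.t3 p ∈ (T (revFin ij.2)).tiles ∧
          Loz.t2 p ∈ (T (revFin ij.1)).tiles)).card : ℤ)) := by
    refine Finset.sum_congr rfl ?_
    intro ij _
    rw [hA ij]
  rw [hcongr]
  have hre : ∑ ij ∈ pairsF, ((c * b : ℤ) - (((UF a b c).filter
        (fun p => Loz.t3 p ∈ (T (revFin ij.2)).tiles ∧
          Loz.t2 p ∈ (T (revFin ij.1)).tiles)).card : ℤ))
      = ∑ ij ∈ pairsF, ((c * b : ℤ) - (((UF a b c).filter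
        (fun p => Loz.t3 p ∈ (T ij.1).tiles ∧ Loz.t2 p ∈ (T ij.2).tiles)).card : ℤ)) := by
    apply Finset.sum_nbij' (i := fun ij : Fin k × Fin k => (revFin ij.2, revFin ij.1))
      (j := fun ij : Fin k × Fin k => (revFin ij.2, revFin ij.1))
    · intro ij hij
      rw [hpairs, Finset.mem_filter] at hij ⊢
      exact ⟨Finset.mem_univ _, revFin_lt hij.2⟩
    · intro ij hij
      rw [hpairs, Finset.mem_filter] at hij ⊢
      exact ⟨Finset.mem_univ _, revFin_lt hij.2⟩
    · intro ij _
      exact Prod.ext (by dsimp; rw [revFin_revFin]) (by dsimp; rw [revFin_revFin])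
    · intro ij _
      exact Prod.ext (by dsimp; rw [revFin_revFin]) (by dsimp; rw [revFin_revFin])
    · intro ij _
      rfl
  rw [hre, ← Finset.sum_sub_distrib]
  have hterm : ∀ ij ∈ pairsF, ((a * b : ℤ) - (((UF a b c).filter
      (fun p => Loz.t3 p ∈ (T ij.1).tiles ∧ Loz.t2 p ∈ (T ij.2).tiles)).card : ℤ))
      - ((c * b : ℤ) - (((UF a b c).filter
        (fun p => Loz.t3 p ∈ (T ij.1).tiles ∧ Loz.t2 p ∈ (T ij.2).tiles)).card : ℤ))
      = a * b - b * c := by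
    intro ij _
    ring
  rw [Finset.sum_congr rfl hterm, Finset.sum_const, nsmul_eq_mul, hpairs, pairs_card k]

/-- `σ` maps `H(a,b,c)` onto `H(c,b,a)` and maps lozenges to lozenges, and
`Φ(T₁, …, T_k) = (σ(T_k), …, σ(T₁))` is a bijection from `k`-tilings of `H(a,b,c)` to
`k`-tilings of `H(c,b,a)` with `ν(T) − ν(Φ(T)) = (k(k−1)/2)(ab − bc)`. -/
theorem hexagon_reflection (a b c : ℤ) (ha : 1 ≤ a) (hb : 1 ≤ b) (hc : 1 ≤ c) :
    σmap b '' hexagon a b c = hexagon c b a ∧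
    (∀ L : Loz, ∃ L' : Loz, σmap b '' L.set = L'.set) ∧
    ∀ k : ℕ, ∀ _hk : 1 ≤ k,
      ∃ Φ : (Fin k → LozTiling a b c) → (Fin k → LozTiling c b a),
        Function.Bijective Φ ∧
        (∀ T : Fin k → LozTiling a b c, ∀ c' : Fin k, ∀ L : Loz,
          L ∈ ((Φ T) c').tiles ↔
            ∃ L₀ ∈ (T ⟨k - 1 - (c' : ℕ), by have := c'.isLt; omega⟩).tiles,
              Loz.set L = σmap b '' L₀.set) ∧
        (∀ T : Fin k → LozTiling a b c,
          (nuL T : ℤ) - (nuL (Φ T) : ℤ) = ((k * (k - 1) / 2 : ℕ) : ℤ) * (a * b - b * c)) := by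
  refine ⟨σ_hexagon a b c ha hb hc, fun L => ⟨lozSigma b L, (lozSigma_set b L).symm⟩, ?_⟩
  intro k _hk
  refine ⟨fun T i => sigmaTiling ha hb hc (T (revFin i)), ?_, ?_, ?_⟩
  · refine Function.bijective_iff_has_inverse.mpr
      ⟨fun S i => sigmaTiling hc hb ha (S (revFin i)), ?_, ?_⟩
    · intro T
      funext i
      show sigmaTiling hc hb ha (sigmaTiling ha hb hc (T (revFin (revFin i)))) = T i
      rw [revFin_revFin, sigmaTiling_invol]
    · intro S
      funext i
      show sigmaTiling ha hb hc (sigmaTiling hc hb ha (S (revFin (revFin i)))) = S i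
      rw [revFin_revFin, sigmaTiling_invol]
  · intro T c' L
    constructor
    · intro h
      rw [mem_sigmaTiling] at h
      exact ⟨lozSigma b L, h, by rw [← lozSigma_set, lozSigma_invol]⟩
    · rintro ⟨L₀, hL₀, hset⟩
      rw [mem_sigmaTiling]
      have hL : L = lozSigma b L₀ := Loz.set_injective (by rw [hset, lozSigma_set])
      rw [hL, lozSigma_invol]
      exact hL₀
  · intro T
    exact nu_diff ha hb hc T


end LozengeHex
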